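/- arXiv:1303.7466 — 7 statements merged into one kernel-verified Lean document; each statement's English description precedes it below -/
import Mathlib

section
/- Let r ≥ 1, let p_1, …, p_r be complex constants with p_r ≠ 0, and let F : ℤ → ℂ be the extended impulse response sequence of A_r (so F_0 = ⋯ = F_{r−2} = 0, F_{r−1} = 1, and F_n = Σ_{j=1}^r p_j F_{n−j} for every integer n). Then every sequence {a_n}_{n≥0} in A_r satisfies, for all n ≥ 0, a_n = a_{r−1} F_n + Σ_{j=0}^{r−2} Σ_{k=j}^{r−2} a_k p_{r+j−k} F_{n−1−j}. -/
/-!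
Every solution of the recurrence is the combination `a n = ∑_{k<r} a k * E k n` of the solutions
`E k = initialBasis p r F k` whose initial values `E k 0, …, E k (r-1)` form the `k`-th unit vector, because both sides
solve the recurrence and agree on `0, …, r-1`. Each `E k` is a combination of shifts of the impulse
response `F`; checking its initial values reduces to the recurrence for `F` at an index `N < r`,
where the terms with `F` at the indices `0, …, N-1` vanish. Since `E (r-1) = F`, regrouping
`∑ a k * E k` gives the stated formula.
-/

open Finset

variable {R : Type*} [CommSemiring R]

def SatisfiesRecurrence (p : ℕ → R) (r : ℕ) (f : ℤ → R) : Prop :=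
  ∀ n : ℤ, f n = ∑ j ∈ Icc 1 r, p j * f (n - j)

structure IsImpulseResponse (p : ℕ → R) (r : ℕ) (F : ℤ → R) : Prop where
  satisfiesRecurrence : SatisfiesRecurrence p r F
  eq_zero_of_lt : ∀ i : ℕ, i < r - 1 → F i = 0
  eq_one : F ((r : ℤ) - 1) = 1

-- For an impulse response `F`, the solution whose values at `0, …, r-1` are the indicator of `k`.
def initialBasis (p : ℕ → R) (r : ℕ) (F : ℤ → R) (k : ℕ) (n : ℤ) : R :=
  ∑ j ∈ range (k + 1), p (r + j - k) * F (n - 1 - j)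

variable {p : ℕ → R} {r : ℕ}

namespace SatisfiesRecurrence

variable {f : ℤ → R}

theorem comp_sub_const (hf : SatisfiesRecurrence p r f) (d : ℤ) :
    SatisfiesRecurrence p r (fun n => f (n - d)) := by
  intro n
  dsimp only
  rw [hf (n - d)]
  simp only [sub_right_comm]

theorem const_mul (hf : SatisfiesRecurrence p r f) (c : R) :
    SatisfiesRecurrence p r (fun n => c * f n) := by
  intro n
  dsimp only
  rw [hf n, mul_sum]
  simp only [mul_left_comm]

theorem sum {ι : Type*} (s : Finset ι) {f : ι → ℤ → R}
    (hf : ∀ i ∈ s, SatisfiesRecurrence p r (f i)) :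
    SatisfiesRecurrence p r (fun n => ∑ i ∈ s, f i n) := by
  intro n
  simp only [mul_sum]
  rw [sum_comm]
  exact sum_congr rfl fun i hi => hf i hi n

theorem natCast (hf : SatisfiesRecurrence p r f) (n : ℕ) (hn : r ≤ n) :
    f n = ∑ j ∈ Icc 1 r, p j * f ↑(n - j) := by
  rw [hf n]
  refine sum_congr rfl fun j hj => ?_
  rw [Nat.cast_sub (by rw [mem_Icc] at hj; omega)]

theorem initialBasis (hF : SatisfiesRecurrence p r f) (k : ℕ) :
    SatisfiesRecurrence p r (initialBasis p r f k) := by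
  unfold _root_.initialBasis
  simp only [sub_sub]
  exact sum _ fun j _ => (hF.comp_sub_const _).const_mul _

theorem initialBasis_last {F : ℤ → R} (hF : SatisfiesRecurrence p (r + 1) F) (n : ℤ) :
    _root_.initialBasis p (r + 1) F r n = F n := by
  rw [hF n, ← Ico_add_one_right_eq_Icc, sum_Ico_eq_sum_range, _root_.initialBasis]
  refine sum_congr (by simp) fun j _ => ?_
  rw [show r + 1 + j - r = 1 + j by omega]
  push_cast
  ring_nf

theorem sum_initialBasis_eq {F : ℤ → R} (hF : SatisfiesRecurrence p r F) (hr : 1 ≤ r)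
    (a : ℕ → R) (n : ℤ) :
    ∑ k ∈ range r, a k * _root_.initialBasis p r F k n =
      a (r - 1) * F n + ∑ j ∈ range (r - 1), ∑ k ∈ Icc j (r - 2),
        a k * p (r + j - k) * F (n - 1 - j) := by
  obtain ⟨r, rfl⟩ := Nat.exists_eq_add_of_le' hr
  rw [sum_range_succ, hF.initialBasis_last, add_comm, Nat.add_sub_cancel]
  simp only [_root_.initialBasis, mul_sum, ← mul_assoc]
  congr 1
  exact sum_comm' fun k j => by simp only [mem_range, mem_Icc]; omega

end SatisfiesRecurrence

theorem eq_of_forall_lt_of_recurrence {a b : ℕ → R}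
    (ha : ∀ n, r ≤ n → a n = ∑ j ∈ Icc 1 r, p j * a (n - j))
    (hb : ∀ n, r ≤ n → b n = ∑ j ∈ Icc 1 r, p j * b (n - j))
    (hab : ∀ n < r, a n = b n) : a = b := by
  funext n
  induction n using Nat.strong_induction_on with
  | _ n ih =>
    rcases lt_or_ge n r with hn | hn
    · exact hab n hn
    · rw [ha n hn, hb n hn]
      refine sum_congr rfl fun j hj => ?_
      rw [mem_Icc] at hj
      rw [ih (n - j) (by omega)]

namespace IsImpulseResponse

variable {F : ℤ → R}

theorem sum_Ico_mul_sub_eq (hF : IsImpulseResponse p r F) {N : ℕ} (hN : N < r) :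
    ∑ i ∈ Ico (N + 1) (r + 1), p i * F (N - i) = F N := by
  have hlow : ∑ i ∈ Ico 1 (N + 1), p i * F (N - i) = 0 :=
    sum_eq_zero fun i hi => by
      rw [mem_Ico] at hi
      rw [show (N : ℤ) - i = ((N - i : ℕ) : ℤ) by omega, hF.eq_zero_of_lt _ (by omega), mul_zero]
  rw [hF.satisfiesRecurrence N, ← Ico_add_one_right_eq_Icc,
    ← sum_Ico_consecutive _ (by omega : 1 ≤ N + 1) (by omega : N + 1 ≤ r + 1), hlow, zero_add]

theorem initialBasis_of_lt (hF : IsImpulseResponse p r F) {k m : ℕ} (hk : k < r)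
    (hm : m < r) : initialBasis p r F k m = if m = k then 1 else 0 := by
  have hzero : ∀ j < m, p (r + j - k) * F (m - 1 - j) = 0 := fun j hj => by
    rw [show (m : ℤ) - 1 - j = ((m - 1 - j : ℕ) : ℤ) by omega, hF.eq_zero_of_lt _ (by omega), mul_zero]
  rcases lt_or_ge k m with hkm | hmk
  · rw [if_neg (by omega)]
    exact sum_eq_zero fun j hj => hzero j (by rw [mem_range] at hj; omega)
  have htail : ∑ j ∈ Ico m (k + 1), p (r + j - k) * F (m - 1 - j) = F ↑(r - 1 + m - k) := by
    rw [← hF.sum_Ico_mul_sub_eq (N := r - 1 + m - k) (by omega),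
      show r - 1 + m - k + 1 = m + (r - k) by omega, show r + 1 = k + 1 + (r - k) by omega,
      ← sum_Ico_add']
    refine sum_congr rfl fun j hj => ?_
    rw [mem_Ico] at hj
    rw [show r + j - k = j + (r - k) by omega]
    congr 2
    push_cast
    omega
  rw [initialBasis, range_eq_Ico, ← sum_Ico_consecutive _ (Nat.zero_le m) (by omega : m ≤ k + 1),
    sum_eq_zero fun j hj => hzero j (mem_Ico.1 hj).2, zero_add, htail]
  split_ifs with hmk'
  · rw [show ((r - 1 + m - k : ℕ) : ℤ) = r - 1 by omega, hF.eq_one]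
  · exact hF.eq_zero_of_lt _ (by omega)

theorem eq_sum_initialBasis (hF : IsImpulseResponse p r F) {a : ℕ → R}
    (ha : ∀ n, r ≤ n → a n = ∑ j ∈ Icc 1 r, p j * a (n - j)) (n : ℕ) :
    a n = ∑ k ∈ range r, a k * initialBasis p r F k n := by
  refine congrFun (eq_of_forall_lt_of_recurrence ha
    (b := fun n : ℕ => ∑ k ∈ range r, a k * initialBasis p r F k n) ?_ fun m hm => ?_) n
  · exact (SatisfiesRecurrence.sum _ fun k _ => (hF.satisfiesRecurrence.initialBasis k).const_mul (a k)).natCast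
  · rw [sum_congr rfl fun k hk => by
      rw [hF.initialBasis_of_lt (mem_range.1 hk) hm, mul_ite, mul_one, mul_zero],
      sum_ite_eq, if_pos (mem_range.2 hm)]

end IsImpulseResponse

theorem statement4_general (r : ℕ) (hr : 1 ≤ r) (p : ℕ → ℂ)
    (F : ℤ → ℂ)
    (hFrec : ∀ n : ℤ, F n = ∑ j ∈ Finset.Icc 1 r, p j * F (n - j))
    (hF0 : ∀ i : ℕ, i < r - 1 → F i = 0) (hF1 : F ((r : ℤ) - 1) = 1)
    (a : ℕ → ℂ) (ha : ∀ n, r ≤ n → a n = ∑ j ∈ Finset.Icc 1 r, p j * a (n - j)) :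
    ∀ n : ℕ, a n =
      a (r - 1) * F n +
        ∑ j ∈ Finset.range (r - 1), ∑ k ∈ Finset.Icc j (r - 2),
          a k * p (r + j - k) * F ((n : ℤ) - 1 - j) := by
  intro n
  have hF : IsImpulseResponse p r F := ⟨hFrec, hF0, hF1⟩
  rw [hF.eq_sum_initialBasis ha n, hF.satisfiesRecurrence.sum_initialBasis_eq hr]

/-- If `F : ℤ → ℂ` is the extended impulse response sequence of `A_r`,
then every sequence `a` in `A_r` satisfies, for all `n ≥ 0`,
`a n = a (r-1) * F n + ∑_{j=0}^{r-2} ∑_{k=j}^{r-2} a k * p (r+j-k) * F (n-1-j)`. -/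
theorem statement4 (r : ℕ) (hr : 1 ≤ r) (p : ℕ → ℂ) (hp : p r ≠ 0)
    (F : ℤ → ℂ)
    (hFrec : ∀ n : ℤ, F n = ∑ j ∈ Finset.Icc 1 r, p j * F (n - j))
    (hF0 : ∀ i : ℕ, i < r - 1 → F i = 0) (hF1 : F ((r : ℤ) - 1) = 1)
    (a : ℕ → ℂ) (ha : ∀ n, r ≤ n → a n = ∑ j ∈ Finset.Icc 1 r, p j * a (n - j)) :
    ∀ n : ℕ, a n =
      a (r - 1) * F n +
        ∑ j ∈ Finset.range (r - 1), ∑ k ∈ Finset.Icc j (r - 2),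
          a k * p (r + j - k) * F ((n : ℤ) - 1 - j) :=
  statement4_general r hr p F hFrec hF0 hF1 a ha
end

section
/- Let r ≥ 1, let p_1, …, p_r be complex constants with p_r ≠ 0, and let F : ℤ → ℂ be the extended impulse response sequence of A_r. Then for all integers k and n with 0 ≤ k ≤ r−2 and 0 ≤ n ≤ r−2, one has Σ_{j=0}^{k} p_{r+j−k} F_{n−1−j} = δ_{k,n}, where δ_{k,n} = 1 if k = n and δ_{k,n} = 0 otherwise. -/
/-!
Put `s = r - k - 1` and `N = n + s`. When `n ≤ k`, the values `F (N - 1), …, F (N - s)` lie in the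
window `F 0 = ⋯ = F (r - 2) = 0`, so the recurrence at `N` collapses to its last `k + 1` terms,
which form exactly the sum in question. Hence that sum is `F (n + r - k - 1)`: this is
`F (r - 1) = 1` if `n = k`, and a value in the zero window if `n < k`. When `n > k`, every term of
the sum already lies in the zero window.
-/

open Finset

section LinearRecurrence

variable {R : Type*} [Semiring R] {r : ℕ} {p : ℕ → R} {F : ℤ → R}

theorem sum_Icc_one_eq_sum_range (f : ℕ → R) (r : ℕ) :
    ∑ j ∈ Icc 1 r, f j = ∑ j ∈ range r, f (j + 1) := by
  rw [range_eq_Ico, sum_Ico_add', ← Ico_add_one_right_eq_Icc, zero_add]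

theorem eq_sum_tail_of_vanishing (hFrec : ∀ n : ℤ, F n = ∑ j ∈ Icc 1 r, p j * F (n - j))
    {s m : ℕ} (hr : r = s + m) (N : ℤ) (hzero : ∀ j < s, F (N - 1 - j) = 0) :
    F N = ∑ i ∈ range m, p (s + i + 1) * F (N - 1 - s - i) := by
  rw [hFrec, sum_Icc_one_eq_sum_range, hr, sum_range_add]
  have hhead : ∑ j ∈ range s, p (j + 1) * F (N - ↑(j + 1)) = 0 := sum_eq_zero fun j hj => by
    rw [Nat.cast_succ, ← sub_sub, sub_right_comm, hzero j (mem_range.1 hj), mul_zero]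
  rw [hhead, zero_add]
  refine sum_congr rfl fun i _ => ?_
  push_cast
  ring_nf

theorem eq_zero_of_nonneg_of_le_sub_two (hF0 : ∀ i : ℕ, i < r - 1 → F i = 0) (m : ℤ)
    (h0 : 0 ≤ m) (hm : m ≤ r - 2) : F m = 0 := by
  lift m to ℕ using h0
  exact hF0 m (by omega)

end LinearRecurrence

theorem statement5_general (r : ℕ) (p : ℕ → ℂ)
    (F : ℤ → ℂ)
    (hFrec : ∀ n : ℤ, F n = ∑ j ∈ Finset.Icc 1 r, p j * F (n - j))
    (hF0 : ∀ i : ℕ, i < r - 1 → F i = 0) (hF1 : F ((r : ℤ) - 1) = 1)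
    (k n : ℕ) (hk : k + 2 ≤ r) (hn : n + 2 ≤ r) :
    ∑ j ∈ Finset.range (k + 1), p (r + j - k) * F ((n : ℤ) - 1 - j) =
      if k = n then 1 else 0 := by
  have hzero := eq_zero_of_nonneg_of_le_sub_two hF0
  rcases le_or_gt n k with hnk | hkn
  · have htail := eq_sum_tail_of_vanishing hFrec (s := r - k - 1) (m := k + 1) (by omega)
      (n + (r - k - 1 : ℕ)) fun j hj => hzero _ (by omega) (by omega)
    calc ∑ j ∈ range (k + 1), p (r + j - k) * F ((n : ℤ) - 1 - j)
        = F (n + (r - k - 1 : ℕ)) := by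
          rw [htail]
          exact sum_congr rfl fun j _ => by congr 2 <;> omega
      _ = if k = n then 1 else 0 := by
          split_ifs with hkeq
          · rw [← hF1, hkeq]
            congr 1
            omega
          · exact hzero _ (by omega) (by omega)
  · rw [if_neg (by omega)]
    refine sum_eq_zero fun j hj => ?_
    have hj : j ≤ k := Nat.lt_succ_iff.1 (mem_range.1 hj)
    rw [hzero _ (by omega) (by omega), mul_zero]

/-- For the extended impulse response sequence `F : ℤ → ℂ` of `A_r`,
for all `0 ≤ k ≤ r-2` and `0 ≤ n ≤ r-2` one has
`∑_{j=0}^{k} p (r+j-k) * F (n-1-j) = δ_{k,n}`. -/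
theorem statement5 (r : ℕ) (hr : 1 ≤ r) (p : ℕ → ℂ) (hp : p r ≠ 0)
    (F : ℤ → ℂ)
    (hFrec : ∀ n : ℤ, F n = ∑ j ∈ Finset.Icc 1 r, p j * F (n - j))
    (hF0 : ∀ i : ℕ, i < r - 1 → F i = 0) (hF1 : F ((r : ℤ) - 1) = 1)
    (k n : ℕ) (hk : k + 2 ≤ r) (hn : n + 2 ≤ r) :
    ∑ j ∈ Finset.range (k + 1), p (r + j - k) * F ((n : ℤ) - 1 - j) =
      if k = n then 1 else 0 :=
  statement5_general r p F hFrec hF0 hF1 k n hk hn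
end

section
/- Let p_1, p_2 be complex constants with p_1 ≠ 0 and p_2 ≠ 0, let {F_n} be the impulse response sequence with respect to E_2 = {p_1, p_2}, and let {a_n}_{n≥0} satisfy a_n = p_1 a_{n−1} + p_2 a_{n−2} for n ≥ 2. Assume D := a_1² − a_0 a_1 p_1 − a_0² p_2 ≠ 0, and set c_1 = (a_1 − a_0 p_1)/(p_1 D) and c_2 = −a_1 p_2/(p_1 D). Then for all n ≥ 1, F_n = c_1 a_{n+1} + c_2 a_{n−1}. -/
/-!
Both `n ↦ F (n + 1)` and `n ↦ c₁ a (n + 2) + c₂ a n` solve the recurrence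
`u (n + 2) = p₁ u (n + 1) + p₂ u n`, the second because solutions form a module stable under
shifts. A solution is determined by its first two terms, and the choice of `c₁, c₂` makes these
`1` and `p₁`, the first two terms of the shifted impulse response sequence.
-/

namespace LinearRecurrence

variable {R : Type*} [CommSemiring R]

theorem IsSolution.comp_add_right {E : LinearRecurrence R} {u : ℕ → R} (hu : E.IsSolution u)
    (k : ℕ) : E.IsSolution fun n ↦ u (n + k) := by
  intro n
  simpa only [add_right_comm n k] using hu (n + k)

/-- The recurrence `E₂ = {p₁, p₂}`; Mathlib lists coefficients from the oldest term on. -/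
def secondOrder (p₁ p₂ : R) : LinearRecurrence R := ⟨2, ![p₂, p₁]⟩

variable {p₁ p₂ : R} {u v : ℕ → R}

theorem isSolution_secondOrder_iff :
    (secondOrder p₁ p₂).IsSolution u ↔ ∀ n, u (n + 2) = p₁ * u (n + 1) + p₂ * u n := by
  change (∀ n, u (n + 2) = ∑ i : Fin 2, ![p₂, p₁] i * u (n + i)) ↔ _
  simp [Fin.sum_univ_two, add_comm]

theorem isSolution_secondOrder_of_forall_two_le
    (hu : ∀ n, 2 ≤ n → u n = p₁ * u (n - 1) + p₂ * u (n - 2)) :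
    (secondOrder p₁ p₂).IsSolution u :=
  isSolution_secondOrder_iff.mpr fun n ↦ hu (n + 2) (Nat.le_add_left 2 n)

theorem eq_of_isSolution_secondOrder (hu : (secondOrder p₁ p₂).IsSolution u)
    (hv : (secondOrder p₁ p₂).IsSolution v) (h₀ : u 0 = v 0) (h₁ : u 1 = v 1) : u = v := by
  refine ((secondOrder p₁ p₂).eq_iff_eqOn_range_order u v hu hv).mpr fun n hn ↦ ?_
  have hn : n < 2 := Finset.mem_range.mp hn
  interval_cases n <;> assumption

end LinearRecurrence

open LinearRecurrence

theorem statement8_general (p₁ p₂ : ℂ) (hp₁ : p₁ ≠ 0)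
    (F : ℕ → ℂ) (hF0 : F 0 = 0) (hF1 : F 1 = 1)
    (hFrec : ∀ n, 2 ≤ n → F n = p₁ * F (n - 1) + p₂ * F (n - 2))
    (a : ℕ → ℂ) (harec : ∀ n, 2 ≤ n → a n = p₁ * a (n - 1) + p₂ * a (n - 2))
    (D : ℂ) (hD : D = a 1 ^ 2 - a 0 * a 1 * p₁ - a 0 ^ 2 * p₂) (hD0 : D ≠ 0)
    (c₁ c₂ : ℂ) (hc₁ : c₁ = (a 1 - a 0 * p₁) / (p₁ * D))
    (hc₂ : c₂ = -(a 1 * p₂) / (p₁ * D)) :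
    ∀ n, 1 ≤ n → F n = c₁ * a (n + 1) + c₂ * a (n - 1) := by
  have hF := isSolution_secondOrder_of_forall_two_le hFrec
  have ha := isSolution_secondOrder_of_forall_two_le harec
  have hsol : (secondOrder p₁ p₂).IsSolution fun n ↦ c₁ * a (n + 2) + c₂ * a n :=
    (is_sol_iff_mem_solSpace _ _).mpr <|
      add_mem (Submodule.smul_mem _ c₁ ((is_sol_iff_mem_solSpace _ _).mp (ha.comp_add_right 2)))
        (Submodule.smul_mem _ c₂ ((is_sol_iff_mem_solSpace _ _).mp ha))
  have ha₂ : a 2 = p₁ * a 1 + p₂ * a 0 := isSolution_secondOrder_iff.mp ha 0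
  have ha₃ : a 3 = p₁ * a 2 + p₂ * a 1 := isSolution_secondOrder_iff.mp ha 1
  have hF₂ : F 2 = p₁ := by simpa [hF0, hF1] using isSolution_secondOrder_iff.mp hF 0
  have hpD : p₁ * D ≠ 0 := mul_ne_zero hp₁ hD0
  have key := eq_of_isSolution_secondOrder (hF.comp_add_right 1) hsol
    (by rw [hF1, hc₁, hc₂, ha₂]; field_simp; linear_combination p₁ * hD)
    (by rw [hF₂, hc₁, hc₂, ha₃, ha₂]; field_simp; linear_combination p₁ ^ 2 * hD)
  intro n hn
  obtain ⟨m, rfl⟩ := Nat.exists_eq_add_of_le' hn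
  simpa using congrFun key m

/-- The impulse response sequence `F` of `A₂` is expressed in terms of
any sequence `a ∈ A₂` with `D = a₁² - a₀a₁p₁ - a₀²p₂ ≠ 0`:
`F n = c₁ * a (n+1) + c₂ * a (n-1)` for all `n ≥ 1`, where
`c₁ = (a₁ - a₀p₁)/(p₁ D)` and `c₂ = -a₁p₂/(p₁ D)`. -/
theorem statement8 (p₁ p₂ : ℂ) (hp₁ : p₁ ≠ 0) (hp₂ : p₂ ≠ 0)
    (F : ℕ → ℂ) (hF0 : F 0 = 0) (hF1 : F 1 = 1)
    (hFrec : ∀ n, 2 ≤ n → F n = p₁ * F (n - 1) + p₂ * F (n - 2))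
    (a : ℕ → ℂ) (harec : ∀ n, 2 ≤ n → a n = p₁ * a (n - 1) + p₂ * a (n - 2))
    (D : ℂ) (hD : D = a 1 ^ 2 - a 0 * a 1 * p₁ - a 0 ^ 2 * p₂) (hD0 : D ≠ 0)
    (c₁ c₂ : ℂ) (hc₁ : c₁ = (a 1 - a 0 * p₁) / (p₁ * D))
    (hc₂ : c₂ = -(a 1 * p₂) / (p₁ * D)) :
    ∀ n, 1 ≤ n → F n = c₁ * a (n + 1) + c₂ * a (n - 1) :=
  statement8_general p₁ p₂ hp₁ F hF0 hF1 hFrec a harec D hD hD0 c₁ c₂ hc₁ hc₂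
end

section
/- Let p_1, p_2 be complex constants with p_2 ≠ 0, and let F : ℤ → ℂ be the extended impulse response sequence with respect to E_2 = {p_1, p_2}. Then for every m ≥ 1, every n ≥ 0, and every integer r, F_{r+mn} = Σ_{j=0}^{n} C(n,j) (F_m)^j (p_2 F_{m−1})^{n−j} F_{r+j}, where C(n,j) is the binomial coefficient. -/
/-!
Both sides of the addition formula `F (r + m) = F m * F (r + 1) + p₂ F (m - 1) * F r` solve
the recurrence in `m` and agree at `m = 0, 1` (since `p₂ F (-1) = 1`). Read with `T` the
translation by one, it says that the translation `T^m` sends `F` to `L F`, where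
`L = F m • T + p₂ F (m - 1) • 1` commutes with `T^m`; hence `T^(m n) F = L^n F`, and the
binomial theorem expands `L^n`.
-/

open Finset

section Shift

variable (R : Type*) [CommSemiring R]

def seqShift (k : ℤ) : Module.End R (ℤ → R) :=
  LinearMap.funLeft R R (· + k)

variable {R}

@[simp]
theorem seqShift_apply (k : ℤ) (f : ℤ → R) (r : ℤ) : seqShift R k f r = f (r + k) := rfl

theorem seqShift_mul (a b : ℤ) : seqShift R a * seqShift R b = seqShift R (a + b) := by
  ext f r
  simp only [Module.End.mul_apply, seqShift_apply]
  ring_nf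

theorem seqShift_pow (k : ℤ) (n : ℕ) : seqShift R k ^ n = seqShift R (n * k) := by
  induction n with
  | zero => ext f r; simp
  | succ n ih => rw [pow_succ, ih, seqShift_mul]; push_cast; ring_nf

theorem commute_seqShift (a b : ℤ) : Commute (seqShift R a) (seqShift R b) := by
  rw [Commute, SemiconjBy, seqShift_mul, seqShift_mul, add_comm]

theorem apply_add_mul_eq_sum_of_apply_add {f : ℤ → R} {m : ℤ} {A B : R}
    (h : ∀ r, f (r + m) = A * f (r + 1) + B * f r) (n : ℕ) (r : ℤ) :
    f (r + m * n) = ∑ j ∈ range (n + 1), n.choose j * A ^ j * B ^ (n - j) * f (r + j) := by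
  set L : Module.End R (ℤ → R) := A • seqShift R 1 + B • 1
  have hL : seqShift R m f = L f := funext h
  have hcomm : Commute (seqShift R m) L :=
    ((commute_seqShift m 1).smul_right A).add_right ((Commute.one_right _).smul_right B)
  have hpow : (seqShift R m ^ n) f = (L ^ n) f := by
    induction n with
    | zero => rfl
    | succ n ih =>
      rw [pow_succ, Module.End.mul_apply, hL, ← Module.End.mul_apply, (hcomm.pow_left n).eq,
        Module.End.mul_apply, ih, ← Module.End.mul_apply, ← pow_succ']
  have hbinom := (((Commute.one_right (seqShift R 1)).smul_right B).smul_left A).add_pow n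
  have hr := congrFun hpow r
  rw [hbinom, seqShift_pow] at hr
  simp only [seqShift_apply, smul_pow, seqShift_pow, mul_one, one_pow, Algebra.mul_smul_comm,
    Algebra.smul_mul_assoc, LinearMap.sum_apply, LinearMap.smul_apply, Module.End.mul_apply,
    Module.End.natCast_apply, nsmul_eq_mul, Finset.sum_apply, Pi.smul_apply, Pi.mul_apply,
    Pi.natCast_apply, smul_eq_mul] at hr
  rw [mul_comm, hr]
  exact sum_congr rfl fun j _ => by ring

end Shift

section Recurrence

variable {R : Type*} [CommRing R] {p₁ p₂ : R}

theorem recurrence_ext {G H : ℤ → R}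
    (hG : ∀ n, G n = p₁ * G (n - 1) + p₂ * G (n - 2))
    (hH : ∀ n, H n = p₁ * H (n - 1) + p₂ * H (n - 2))
    (h0 : G 0 = H 0) (h1 : G 1 = H 1) (n : ℕ) : G n = H n := by
  induction n using Nat.twoStepInduction with
  | zero => exact h0
  | one => exact h1
  | more n ihn ihn1 =>
    have e1 : ((n + 2 : ℕ) : ℤ) - 1 = (n + 1 : ℕ) := by push_cast; ring
    have e2 : ((n + 2 : ℕ) : ℤ) - 2 = n := by push_cast; ring
    rw [hG, hH, e1, e2, ihn, ihn1]

theorem impulseResponse_add {F : ℤ → R} (hF0 : F 0 = 0) (hF1 : F 1 = 1)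
    (hrec : ∀ n, F n = p₁ * F (n - 1) + p₂ * F (n - 2)) (m : ℕ) (r : ℤ) :
    F (r + m) = F m * F (r + 1) + p₂ * F (m - 1) * F r := by
  have hF_neg_one : p₂ * F (-1) = 1 := by
    have h := hrec 1
    norm_num [hF0, hF1] at h
    linear_combination -h
  refine recurrence_ext (p₁ := p₁) (p₂ := p₂) (G := fun k => F (r + k))
    (H := fun k => F k * F (r + 1) + p₂ * F (k - 1) * F r) ?_ ?_ ?_ ?_ m
  · intro n
    rw [hrec (r + n), add_sub_assoc, add_sub_assoc]
  · intro n
    rw [hrec n, hrec (n - 1)]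
    ring_nf
  · simp [hF0, hF_neg_one]
  · simp [hF0, hF1]

end Recurrence

theorem statement11_general (p₁ p₂ : ℂ)
    (F : ℤ → ℂ) (hF0 : F 0 = 0) (hF1 : F 1 = 1)
    (hrec : ∀ n : ℤ, F n = p₁ * F (n - 1) + p₂ * F (n - 2)) :
    ∀ (m n : ℕ), 1 ≤ m → ∀ r : ℤ,
      F (r + (m : ℤ) * n) =
        ∑ j ∈ Finset.range (n + 1),
          (n.choose j : ℂ) * F m ^ j * (p₂ * F ((m : ℤ) - 1)) ^ (n - j) *
            F (r + j) := by
  intro m n _ r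
  exact apply_add_mul_eq_sum_of_apply_add (impulseResponse_add hF0 hF1 hrec m) n r

/-- Nonlinear expression for the extended impulse response sequence:
`F (r + m*n) = ∑_{j=0}^n C(n,j) (F m)^j (p₂ F (m-1))^(n-j) F (r+j)`. -/
theorem statement11 (p₁ p₂ : ℂ) (hp₂ : p₂ ≠ 0)
    (F : ℤ → ℂ) (hF0 : F 0 = 0) (hF1 : F 1 = 1)
    (hrec : ∀ n : ℤ, F n = p₁ * F (n - 1) + p₂ * F (n - 2)) :
    ∀ (m n : ℕ), 1 ≤ m → ∀ r : ℤ,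
      F (r + (m : ℤ) * n) =
        ∑ j ∈ Finset.range (n + 1),
          (n.choose j : ℂ) * F m ^ j * (p₂ * F ((m : ℤ) - 1)) ^ (n - j) *
            F (r + j) :=
  statement11_general p₁ p₂ F hF0 hF1 hrec
end

section
/- Let p_1, p_2 be complex constants with p_2 ≠ 0, and let F : ℤ → ℂ be the extended impulse response sequence with respect to E_2 = {p_1, p_2}. Then for every m ≥ 1 and n ≥ 0 the following three identities hold: (i) Σ_{j=0}^{n} p_2^{n−j+1} C(n,j) (F_m)^j (F_{m−1})^{n−j} F_{j−mn−1} = 1; (ii) Σ_{j=0}^{n} p_2^{n−j} C(n,j) (F_m)^j (F_{m−1})^{n−j} F_{j−mn} = 0; (iii) Σ_{j=0}^{n} p_2^{n−j} C(n,j) (F_m)^j (F_{m−1})^{n−j} F_{j−mn+1} = 1. -/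
/-!
The addition formula `F (t + m) = F m * F (t + 1) + p₂ * F (m - 1) * F t` says that the shift
by `m` acts on `F` as `a E + b`, where `E` is the unit shift, `a = F m` and `b = p₂ F (m - 1)`.
All shifts commute, so the shift by `m n` acts on `F` as `(a E + b) ^ n`; expanding binomially
and evaluating at `-1`, `0`, `1`, where `p₂ F (-1) = 1`, `F 0 = 0`, `F 1 = 1`, gives the three
identities.
-/

open Finset LinearMap

section Shift

variable {R : Type*} [CommRing R]

theorem funLeft_add_pow_apply (c : ℤ) (n : ℕ) (f : ℤ → R) (t : ℤ) :
    ((funLeft R R (· + c)) ^ n) f t = f (t + c * n) := by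
  induction n generalizing t with
  | zero => simp
  | succ n ih => rw [pow_succ', Module.End.mul_apply, funLeft_apply, ih]; push_cast; ring_nf

theorem commute_funLeft_add (c d : ℤ) :
    Commute (funLeft R R (· + c)) (funLeft R R (· + d)) :=
  LinearMap.ext fun f => funext fun t => by simp [add_right_comm]

theorem Commute.pow_apply_eq_of_apply_eq {M : Type*} [AddCommMonoid M] [Module R M]
    {A T : Module.End R M} (hAT : Commute A T) {x : M} (h : A x = T x) (n : ℕ) :
    (A ^ n) x = (T ^ n) x := by
  induction n with
  | zero => rfl
  | succ n ih =>
    rw [pow_succ, Module.End.mul_apply, h, ← Module.End.mul_apply, (hAT.pow_left n).eq,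
      Module.End.mul_apply, ih, ← Module.End.mul_apply, ← pow_succ']

theorem apply_add_mul_eq_sum_choose {f : ℤ → R} {a b : R} {m : ℤ}
    (h : ∀ t, f (t + m) = a * f (t + 1) + b * f t) (n : ℕ) (t : ℤ) :
    f (t + m * n) = ∑ j ∈ range (n + 1), (n.choose j : R) * a ^ j * b ^ (n - j) * f (t + j) := by
  set E := funLeft R R (· + (1 : ℤ))
  have hcomm : Commute (funLeft R R (· + m)) (a • E + algebraMap R _ b) :=
    ((commute_funLeft_add m 1).smul_right a).add_right (Algebra.commute_algebraMap_right b _)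
  have hpow := hcomm.pow_apply_eq_of_apply_eq (x := f) (funext fun s => by simp [E, h]) n
  rw [← funLeft_add_pow_apply m n f t, hpow, (Algebra.commute_algebraMap_right b (a • E)).add_pow]
  simp only [E, smul_pow, ← map_pow, Algebra.smul_mul_assoc, LinearMap.coe_sum,
    LinearMap.coe_smul, Finset.sum_apply, Pi.smul_apply, Module.End.mul_apply,
    Module.End.natCast_apply, nsmul_eq_mul, Module.algebraMap_end_apply, map_smul,
    funLeft_add_pow_apply, one_mul, Pi.mul_apply, Pi.natCast_apply, smul_eq_mul]
  exact sum_congr rfl fun j _ => by ring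

end Shift

section ImpulseResponse

variable {R : Type*} [CommRing R] {p₁ p₂ : R} {F : ℤ → R}

theorem mul_apply_neg_one_of_recurrence (hF0 : F 0 = 0) (hF1 : F 1 = 1)
    (hrec : ∀ n : ℤ, F n = p₁ * F (n - 1) + p₂ * F (n - 2)) : p₂ * F (-1) = 1 := by
  simpa [hF0, hF1] using (hrec 1).symm

theorem apply_add_natCast_of_recurrence (hF0 : F 0 = 0) (hF1 : F 1 = 1)
    (hrec : ∀ n : ℤ, F n = p₁ * F (n - 1) + p₂ * F (n - 2)) (m : ℕ) (t : ℤ) :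
    F (t + m) = F m * F (t + 1) + p₂ * F (m - 1) * F t := by
  induction m using Nat.twoStepInduction generalizing t with
  | zero => simp [hF0, mul_apply_neg_one_of_recurrence hF0 hF1 hrec]
  | one => simp [hF0, hF1]
  | more m ih₀ ih₁ =>
    have e₁ := hrec (t + m + 2)
    have e₂ := hrec (m + 2)
    have e₃ := hrec (m + 1)
    have h₀ := ih₀ t
    have h₁ := ih₁ t
    push_cast at h₀ h₁ ⊢
    ring_nf at e₁ e₂ e₃ h₀ h₁ ⊢
    linear_combination e₁ + p₁ * h₁ + p₂ * h₀ - F (1 + t) * e₂ - p₂ * F t * e₃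

theorem sum_pow_mul_choose_mul_apply_of_recurrence (hF0 : F 0 = 0) (hF1 : F 1 = 1)
    (hrec : ∀ n : ℤ, F n = p₁ * F (n - 1) + p₂ * F (n - 2)) (m n : ℕ) (k : ℤ) :
    ∑ j ∈ range (n + 1), p₂ ^ (n - j) * (n.choose j : R) * F m ^ j * F ((m : ℤ) - 1) ^ (n - j) *
      F ((j : ℤ) - (m : ℤ) * n + k) = F k := by
  rw [show F k = F (k - m * n + m * n) by ring_nf,
    apply_add_mul_eq_sum_choose (apply_add_natCast_of_recurrence hF0 hF1 hrec m)]
  exact sum_congr rfl fun j _ => by rw [mul_pow]; ring_nf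

end ImpulseResponse

theorem statement12_general (p₁ p₂ : ℂ)
    (F : ℤ → ℂ) (hF0 : F 0 = 0) (hF1 : F 1 = 1)
    (hrec : ∀ n : ℤ, F n = p₁ * F (n - 1) + p₂ * F (n - 2)) :
    ∀ (m n : ℕ), 1 ≤ m →
      (∑ j ∈ Finset.range (n + 1),
          p₂ ^ (n - j + 1) * (n.choose j : ℂ) * F m ^ j * F ((m : ℤ) - 1) ^ (n - j) *
            F ((j : ℤ) - (m : ℤ) * n - 1) = 1) ∧
      (∑ j ∈ Finset.range (n + 1),
          p₂ ^ (n - j) * (n.choose j : ℂ) * F m ^ j * F ((m : ℤ) - 1) ^ (n - j) *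
            F ((j : ℤ) - (m : ℤ) * n) = 0) ∧
      (∑ j ∈ Finset.range (n + 1),
          p₂ ^ (n - j) * (n.choose j : ℂ) * F m ^ j * F ((m : ℤ) - 1) ^ (n - j) *
            F ((j : ℤ) - (m : ℤ) * n + 1) = 1) := by
  intro m n _
  have key := sum_pow_mul_choose_mul_apply_of_recurrence hF0 hF1 hrec m n
  refine ⟨?_, by simpa [hF0] using key 0, by simpa [hF1] using key 1⟩
  calc _ = p₂ * F (-1) := by
        rw [← key (-1), mul_sum]
        exact sum_congr rfl fun j _ => by ring_nf
    _ = 1 := mul_apply_neg_one_of_recurrence hF0 hF1 hrec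

/-- Three identities for the extended impulse response sequence `F : ℤ → ℂ`
with respect to `E₂ = {p₁, p₂}`, valid for all `m ≥ 1` and `n ≥ 0`. -/
theorem statement12 (p₁ p₂ : ℂ) (hp₂ : p₂ ≠ 0)
    (F : ℤ → ℂ) (hF0 : F 0 = 0) (hF1 : F 1 = 1)
    (hrec : ∀ n : ℤ, F n = p₁ * F (n - 1) + p₂ * F (n - 2)) :
    ∀ (m n : ℕ), 1 ≤ m →
      (∑ j ∈ Finset.range (n + 1),
          p₂ ^ (n - j + 1) * (n.choose j : ℂ) * F m ^ j * F ((m : ℤ) - 1) ^ (n - j) *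
            F ((j : ℤ) - (m : ℤ) * n - 1) = 1) ∧
      (∑ j ∈ Finset.range (n + 1),
          p₂ ^ (n - j) * (n.choose j : ℂ) * F m ^ j * F ((m : ℤ) - 1) ^ (n - j) *
            F ((j : ℤ) - (m : ℤ) * n) = 0) ∧
      (∑ j ∈ Finset.range (n + 1),
          p₂ ^ (n - j) * (n.choose j : ℂ) * F m ^ j * F ((m : ℤ) - 1) ^ (n - j) *
            F ((j : ℤ) - (m : ℤ) * n + 1) = 1) :=
  statement12_general p₁ p₂ F hF0 hF1 hrec
end

section
/- Let p_1, p_2 be integers with p_2 ≠ 0, and let {F_n}_{n≥0} be the integer impulse response sequence with respect to E_2 = {p_1, p_2}. (i) If m, n ≥ 1 and gcd(F_m, F_n) = 1, then F_m · F_n divides F_{mn}. (ii) More generally, if m_1, …, m_s ≥ 1 and F_{m_1}, …, F_{m_s} are pairwise coprime, then the product F_{m_1} F_{m_2} ⋯ F_{m_s} divides F_{m_1 m_2 ⋯ m_s}. -/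
/-!
The sequence satisfies the addition formula `F (a + b + 1) = F (a + 1) F (b + 1) + p₂ F a F b`,
from which `F m ∣ F (m (k + 1))` follows by induction on `k`: thus `m ∣ n` implies `F m ∣ F n`.
Every `F (mᵢ)` then divides `F (∏ mᵢ)`, and pairwise coprime divisors of an element divide it
jointly.
-/

namespace ImpulseResponse

variable {R : Type*} [CommRing R] {p₁ p₂ : R} {F : ℕ → R}

theorem apply_add_add_one (hF0 : F 0 = 0) (hF1 : F 1 = 1)
    (hrec : ∀ n, F (n + 2) = p₁ * F (n + 1) + p₂ * F n) (a b : ℕ) :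
    F (a + b + 1) = F (a + 1) * F (b + 1) + p₂ * F a * F b := by
  induction a generalizing b with
  | zero => simp [hF0, hF1]
  | succ a ih =>
    calc F (a + 1 + b + 1) = F (a + (b + 1) + 1) := by congr 1; omega
      _ = F (a + 1) * F (b + 2) + p₂ * F a * F (b + 1) := ih (b + 1)
      _ = F (a + 2) * F (b + 1) + p₂ * F (a + 1) * F b := by rw [hrec a, hrec b]; ring

theorem apply_dvd_apply_of_dvd (hF0 : F 0 = 0) (hF1 : F 1 = 1)
    (hrec : ∀ n, F (n + 2) = p₁ * F (n + 1) + p₂ * F n) {m n : ℕ} (hmn : m ∣ n) :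
    F m ∣ F n := by
  obtain ⟨k, rfl⟩ := hmn
  rcases m with _ | a
  · simp
  induction k with
  | zero => simp [hF0]
  | succ k ih =>
    rw [show (a + 1) * (k + 1) = a + (a + 1) * k + 1 by ring,
      apply_add_add_one hF0 hF1 hrec]
    exact dvd_add (dvd_mul_right _ _) (dvd_mul_of_dvd_right ih _)

end ImpulseResponse

open Function in
theorem prod_dvd_apply_prod_of_pairwise_isCoprime {R ι : Type*} [CommRing R] [Fintype ι]
    {G : ℕ → R} (hG : ∀ m n, m ∣ n → G m ∣ G n) {m : ι → ℕ}
    (hm : Pairwise (IsCoprime on fun i ↦ G (m i))) :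
    ∏ i, G (m i) ∣ G (∏ i, m i) :=
  Fintype.prod_dvd_of_coprime hm fun i ↦ hG _ _ (Finset.dvd_prod_of_mem m (Finset.mem_univ i))

theorem statement14_general (p₁ p₂ : ℤ)
    (F : ℕ → ℤ) (hF0 : F 0 = 0) (hF1 : F 1 = 1)
    (hrec : ∀ n, 2 ≤ n → F n = p₁ * F (n - 1) + p₂ * F (n - 2)) :
    (∀ m n : ℕ, 1 ≤ m → 1 ≤ n → IsCoprime (F m) (F n) →
      F m * F n ∣ F (m * n)) ∧
    (∀ (s : ℕ) (m : Fin s → ℕ), (∀ i, 1 ≤ m i) →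
      (∀ i j, i ≠ j → IsCoprime (F (m i)) (F (m j))) →
      (∏ i, F (m i)) ∣ F (∏ i, m i)) := by
  have hdvd : ∀ m n, m ∣ n → F m ∣ F n := fun _ _ ↦
    ImpulseResponse.apply_dvd_apply_of_dvd hF0 hF1 fun n ↦ by simpa using hrec (n + 2) (by omega)
  refine ⟨fun m n _ _ hco ↦ ?_, fun s m _ hco ↦ ?_⟩
  · exact hco.mul_dvd (hdvd _ _ (dvd_mul_right m n)) (hdvd _ _ (dvd_mul_left n m))
  · exact prod_dvd_apply_prod_of_pairwise_isCoprime hdvd hco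

/-- For the integer impulse response sequence `F` with respect to
`E₂ = {p₁, p₂}`: (i) if `m, n ≥ 1` and `F m`, `F n` are coprime then
`F m * F n ∣ F (m*n)`; (ii) if `F (m 1), …, F (m s)` are pairwise coprime
(with each `m i ≥ 1`) then `∏ F (m i) ∣ F (∏ m i)`. -/
theorem statement14 (p₁ p₂ : ℤ) (hp₂ : p₂ ≠ 0)
    (F : ℕ → ℤ) (hF0 : F 0 = 0) (hF1 : F 1 = 1)
    (hrec : ∀ n, 2 ≤ n → F n = p₁ * F (n - 1) + p₂ * F (n - 2)) :
    (∀ m n : ℕ, 1 ≤ m → 1 ≤ n → IsCoprime (F m) (F n) →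
      F m * F n ∣ F (m * n)) ∧
    (∀ (s : ℕ) (m : Fin s → ℕ), (∀ i, 1 ≤ m i) →
      (∀ i j, i ≠ j → IsCoprime (F (m i)) (F (m j))) →
      (∏ i, F (m i)) ∣ F (∏ i, m i)) :=
  statement14_general p₁ p₂ F hF0 hF1 hrec
end

section
/- Let {T_n}_{n≥0} be the tribonacci sequence defined by T_0 = T_1 = 0, T_2 = 1, and T_n = T_{n−1} + T_{n−2} + T_{n−3} for n ≥ 3, and let {a_n}_{n≥0} be the tribonacci-like sequence defined by a_0 = 2, a_1 = 1, a_2 = 1, and a_n = a_{n−1} + a_{n−2} + a_{n−3} for n ≥ 3. Then: (i) for all n ≥ 2, a_n = T_n + 3 T_{n−1} + T_{n−2}; and (ii) for all n ≥ 1, 19 T_n = 6 a_{n+1} − 4 a_n − a_{n−1}. -/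
/-!
Both sequences, and every fixed integer combination of shifts of one of them, solve the linear
recurrence `x (n + 3) = x (n + 2) + x (n + 1) + x n`, and a solution is determined by its first
three terms. So each identity reduces to checking it for three consecutive indices.
-/

namespace LinearRecurrence

variable (R : Type*) [CommSemiring R]

def tribonacci : LinearRecurrence R := ⟨3, fun _ ↦ 1⟩

variable {R}

theorem isSolution_tribonacci_iff {u : ℕ → R} :
    (tribonacci R).IsSolution u ↔ ∀ n, u (n + 3) = u (n + 2) + u (n + 1) + u n := by
  change (∀ n, u (n + 3) = ∑ i : Fin 3, 1 * u (n + i)) ↔ _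
  simp only [Fin.sum_univ_three, one_mul, Fin.val_zero, Fin.val_one, Fin.val_two, add_zero]
  exact forall_congr' fun n ↦ by rw [add_comm (u n), add_right_comm, add_comm (u (n + 1))]

theorem eq_of_tribonacci_rec {u v : ℕ → R} (hu : ∀ n, u (n + 3) = u (n + 2) + u (n + 1) + u n)
    (hv : ∀ n, v (n + 3) = v (n + 2) + v (n + 1) + v n)
    (h0 : u 0 = v 0) (h1 : u 1 = v 1) (h2 : u 2 = v 2) : u = v := by
  refine ((tribonacci R).eq_iff_eqOn_range_order u v (isSolution_tribonacci_iff.2 hu)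
    (isSolution_tribonacci_iff.2 hv)).2 fun n hn ↦ ?_
  obtain ⟨n, rfl⟩ : ∃ i : Fin 3, (i : ℕ) = n := ⟨⟨n, by simpa [tribonacci] using hn⟩, rfl⟩
  fin_cases n <;> assumption

end LinearRecurrence

open LinearRecurrence

/-- Interrelations between the tribonacci sequence `T`
(`T 0 = T 1 = 0`, `T 2 = 1`) and the tribonacci-like sequence `a`
(`a 0 = 2`, `a 1 = 1`, `a 2 = 1`), both satisfying
`x n = x (n-1) + x (n-2) + x (n-3)` for `n ≥ 3`. -/
theorem statement17 (T a : ℕ → ℤ)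
    (hT0 : T 0 = 0) (hT1 : T 1 = 0) (hT2 : T 2 = 1)
    (hTrec : ∀ n, 3 ≤ n → T n = T (n - 1) + T (n - 2) + T (n - 3))
    (ha0 : a 0 = 2) (ha1 : a 1 = 1) (ha2 : a 2 = 1)
    (harec : ∀ n, 3 ≤ n → a n = a (n - 1) + a (n - 2) + a (n - 3)) :
    (∀ n, 2 ≤ n → a n = T n + 3 * T (n - 1) + T (n - 2)) ∧
    (∀ n, 1 ≤ n → 19 * T n = 6 * a (n + 1) - 4 * a n - a (n - 1)) := by
  have hT n : T (n + 3) = T (n + 2) + T (n + 1) + T n := hTrec (n + 3) (by omega)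
  have ha n : a (n + 3) = a (n + 2) + a (n + 1) + a n := harec (n + 3) (by omega)
  have hT3 : T 3 = 1 := by simp [hT 0, hT0, hT1, hT2]
  have hT4 : T 4 = 2 := by simp [hT 1, hT3, hT1, hT2]
  have ha3 : a 3 = 4 := by simp [ha 0, ha0, ha1, ha2]
  have ha4 : a 4 = 6 := by simp [ha 1, ha3, ha1, ha2]
  have hi : (fun n ↦ a (n + 2)) = fun n ↦ T (n + 2) + 3 * T (n + 1) + T n :=
    eq_of_tribonacci_rec (fun n ↦ ha (n + 2))
      (fun n ↦ by linear_combination hT (n + 2) + 3 * hT (n + 1) + hT n)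
      (by simp [*]) (by simp [*]) (by simp [*])
  have hii : (fun n ↦ 19 * T (n + 1)) = fun n ↦ 6 * a (n + 2) - 4 * a (n + 1) - a n :=
    eq_of_tribonacci_rec (fun n ↦ by linear_combination 19 * hT (n + 1))
      (fun n ↦ by linear_combination 6 * ha (n + 2) - 4 * ha (n + 1) - ha n)
      (by simp [*]) (by simp [*]) (by simp [*])
  refine ⟨fun n hn ↦ ?_, fun n hn ↦ ?_⟩
  · obtain ⟨m, rfl⟩ := Nat.exists_eq_add_of_le' hn
    exact congrFun hi m
  · obtain ⟨m, rfl⟩ := Nat.exists_eq_add_of_le' hn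
    exact congrFun hii m
end
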